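/- Assume the relative quality functions satisfy q_j(A) = 1/(n·C(n−1,|A|)) for every j ∈ C and A ⊆ C∖{j}. Then for every nonempty M ⊆ C and k ∈ {1,…,m}, p_M^{(k)} = ∑_{j∈M} ∑_{A⊆C, |(M∖A)∪{j}|=k} (−1)^{|{j}∖A|} · (1/(n·C(n−1,|A∖{j}|))) · φ(A). -/

import Mathlib

/-!
Almost surely the lifetimes are distinct. Then exactly one component `j` is critical for the set
`B` of components outliving it (`φ (B ∪ {j}) = 1`, `φ B = 0`), and the system fails at `T_j`.
So `T_C = T_{k:M}` is, up to a null set, the disjoint union over `j ∈ M` and `B ∌ j` with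
`|M ∖ B| = k` and `j` critical for `B` of the events "`B` is the set of components outliving `j`",
whose probabilities are `q_j(B)`. Hence `p_M^(k) = ∑_j ∑_B (φ (B ∪ {j}) - φ B) q_j(B)`, and writing
each `A ⊆ C` as `B` or `B ∪ {j}` with `j ∉ B` turns this into the alternating sum.
-/

open MeasureTheory Finset

/-- Lifetime of the (sub)system on component set `D` with structure function `χ`
(the maximum over the sets `A ⊆ D` with `χ A = 1` of `min_{i ∈ A} T i`). -/
noncomputable def sysLifeOn {Ω : Type*} {n : ℕ} (T : Fin n → Ω → ℝ)
    (D : Finset (Fin n)) (χ : Finset (Fin n) → ℝ) (ω : Ω) : ℝ :=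
  if h : (D.powerset.filter fun A => χ A = 1).Nonempty then
    (D.powerset.filter fun A => χ A = 1).sup' h
      (fun A => if hA : A.Nonempty then A.inf' hA fun i => T i ω else 0)
  else 0

/-- The `k`-th order statistic of the lifetimes `(T i)_{i ∈ M}`. -/
noncomputable def orderStat {Ω : Type*} {n : ℕ} (T : Fin n → Ω → ℝ)
    (M : Finset (Fin n)) (k : ℕ) (ω : Ω) : ℝ :=
  ((M.val.map fun i => T i ω).sort (· ≤ ·)).getD (k - 1) 0

/-- The relative quality function `q_j(A) = Pr(max_{i ∈ C∖A} T_i = T_j < min_{i ∈ A} T_i)`. -/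
noncomputable def relQual {Ω : Type*} [MeasurableSpace Ω] {n : ℕ} (μ : Measure Ω)
    (T : Fin n → Ω → ℝ) (j : Fin n) (A : Finset (Fin n)) : ℝ :=
  (μ {ω | (∀ i ∉ A, T i ω ≤ T j ω) ∧ ∀ i ∈ A, T j ω < T i ω}).toReal

section Critical
variable {ι : Type*} [DecidableEq ι] {φ : Finset ι → ℝ}

def IsCritical (φ : Finset ι → ℝ) (j : ι) (B : Finset ι) : Prop :=
  φ (insert j B) = 1 ∧ φ B = 0

lemma sub_eq_ite_isCritical (hφ01 : ∀ A, φ A = 0 ∨ φ A = 1) (hmono : Monotone φ) (j : ι)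
    (B : Finset ι) [Decidable (IsCritical φ j B)] :
    φ (insert j B) - φ B = if IsCritical φ j B then 1 else 0 := by
  have hle : φ B ≤ φ (insert j B) := hmono (subset_insert j B)
  split_ifs with h
  · rw [h.1, h.2]; norm_num
  · rcases hφ01 B with hB | hB
    · rw [hB, (hφ01 _).resolve_right fun h1 => h ⟨h1, hB⟩, sub_zero]
    · rcases hφ01 (insert j B) with hI | hI
      · linarith
      · rw [hB, hI, sub_self]

end Critical

section Survivors
variable {ι α : Type*} [Fintype ι] [LinearOrder α]

def survivors (x : ι → α) (j : ι) : Finset ι := {i | x j < x i}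

@[simp]
lemma mem_survivors {x : ι → α} {j i : ι} : i ∈ survivors x j ↔ x j < x i := by
  simp [survivors]

lemma self_notMem_survivors (x : ι → α) (j : ι) : j ∉ survivors x j := by
  simp

variable [DecidableEq ι] {φ : Finset ι → ℝ}

lemma sdiff_survivors (M : Finset ι) (x : ι → α) (j : ι) :
    M \ survivors x j = {i ∈ M | x i ≤ x j} := by
  ext i
  simp

lemma subset_insert_survivors {x : ι → α} (hx : Function.Injective x) {s : Finset ι} {j : ι}
    (hj : ∀ i ∈ s, x j ≤ x i) : s ⊆ insert j (survivors x j) := by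
  intro i hi
  rw [mem_insert, mem_survivors, ← hx.eq_iff, eq_comm]
  exact (hj i hi).eq_or_lt

lemma exists_isCritical_survivors (hφ01 : ∀ A, φ A = 0 ∨ φ A = 1) (hmono : Monotone φ)
    (hφempty : φ ∅ = 0) (hφfull : φ univ = 1) {x : ι → α} (hx : Function.Injective x) :
    ∃ j, IsCritical φ j (survivors x j) := by
  have huniv : (univ : Finset ι).Nonempty := by
    by_contra h
    rw [not_nonempty_iff_eq_empty.mp h, hφempty] at hφfull
    exact zero_ne_one hφfull
  obtain ⟨i₀, -, hi₀⟩ := exists_min_image univ x huniv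
  set S : Finset ι := {i | φ (insert i (survivors x i)) = 1}
  have hi₀S : insert i₀ (survivors x i₀) = univ := eq_univ_of_forall fun i =>
    subset_insert_survivors hx (fun i _ => hi₀ i (mem_univ i)) (mem_univ i)
  have hS : S.Nonempty := ⟨i₀, mem_filter.mpr ⟨mem_univ _, by rw [hi₀S, hφfull]⟩⟩
  -- `j` is the last component at whose failure the components failing no earlier still form a
  -- path set
  obtain ⟨j, hjS, hjmax⟩ := exists_max_image S x hS
  refine ⟨j, (mem_filter.mp hjS).2, ?_⟩
  by_contra hj0
  have hj1 : φ (survivors x j) = 1 := (hφ01 _).resolve_left hj0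
  have hne : (survivors x j).Nonempty := by
    by_contra h
    rw [not_nonempty_iff_eq_empty.mp h, hφempty] at hj1
    exact zero_ne_one hj1
  obtain ⟨i, hi, himin⟩ := exists_min_image _ x hne
  have hiS : i ∈ S := by
    refine mem_filter.mpr ⟨mem_univ _, le_antisymm ?_ ?_⟩
    · exact hφfull ▸ hmono (subset_univ _)
    · exact hj1 ▸ hmono (subset_insert_survivors hx himin)
  exact (hjmax i hiS).not_gt (mem_survivors.mp hi)

lemma isCritical_survivors_unique (hmono : Monotone φ) {x : ι → α} (hx : Function.Injective x)
    {j j' : ι} (hj : IsCritical φ j (survivors x j)) (hj' : IsCritical φ j' (survivors x j')) :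
    j = j' := by
  have key : ∀ {a b : ι}, x a < x b → IsCritical φ a (survivors x a) →
      IsCritical φ b (survivors x b) → False := by
    intro a b hab ha hb
    have hsub : insert b (survivors x b) ⊆ survivors x a := by
      intro i hi
      rcases mem_insert.mp hi with rfl | hi
      · exact mem_survivors.mpr hab
      · exact mem_survivors.mpr (hab.trans (mem_survivors.mp hi))
    have := hmono hsub
    rw [hb.1, ha.2] at this
    norm_num at this
  rcases lt_trichotomy (x j) (x j') with h | h | h
  · exact (key h hj hj').elim
  · exact hx h
  · exact (key h hj' hj).elim

end Survivors

lemma sum_signed_powerset_eq {ι : Type*} [Fintype ι] [DecidableEq ι] (φ : Finset ι → ℝ)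
    (c : ℕ → ℝ) {M : Finset ι} {j : ι} (hj : j ∈ M) (k : ℕ) :
    ∑ A ∈ univ.powerset with #((M \ A) ∪ {j}) = k,
        (-1 : ℝ) ^ #({j} \ A) * c #(A \ {j}) * φ A =
      ∑ B ∈ (univ.erase j).powerset with #(M \ B) = k, (φ (insert j B) - φ B) * c #B := by
  have hsplit : (univ : Finset ι).powerset = (insert j (univ.erase j)).powerset := by
    rw [insert_erase (mem_univ j)]
  rw [sum_filter, hsplit, sum_powerset_insert (notMem_erase j univ), ← sum_add_distrib,
    sum_filter]
  refine sum_congr rfl fun B hB => ?_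
  have hjB : j ∉ B := fun h => notMem_erase j univ (mem_powerset.mp hB h)
  have hjMB : j ∈ M \ B := mem_sdiff.mpr ⟨hj, hjB⟩
  have h₁ : (M \ B) ∪ {j} = M \ B := union_eq_left.mpr (singleton_subset_iff.mpr hjMB)
  have h₂ : (M \ insert j B) ∪ {j} = M \ B := by grind
  have h₃ : {j} \ B = {j} := by grind
  have h₄ : {j} \ insert j B = ∅ := by grind
  simp only [h₁, h₂, h₃, h₄, sdiff_singleton_eq_erase, erase_eq_of_notMem hjB, erase_insert hjB,
    card_singleton, card_empty]
  split_ifs <;> ring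

section CriticalPairs
variable {ι : Type*} [Fintype ι] [DecidableEq ι] {φ : Finset ι → ℝ} {M : Finset ι} {k : ℕ}

open Classical in
noncomputable def criticalPairs (φ : Finset ι → ℝ) (M : Finset ι) (k : ℕ) :
    Finset (Σ _ : ι, Finset ι) :=
  M.sigma fun j => {B ∈ (univ.erase j).powerset | #(M \ B) = k ∧ IsCritical φ j B}

lemma mem_criticalPairs {p : Σ _ : ι, Finset ι} :
    p ∈ criticalPairs φ M k ↔ p.1 ∈ M ∧ p.1 ∉ p.2 ∧ #(M \ p.2) = k ∧ IsCritical φ p.1 p.2 := by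
  simp [criticalPairs, subset_erase]

lemma sum_criticalPairs (hφ01 : ∀ A, φ A = 0 ∨ φ A = 1) (hmono : Monotone φ)
    (f : ι → Finset ι → ℝ) :
    ∑ p ∈ criticalPairs φ M k, f p.1 p.2 =
      ∑ j ∈ M, ∑ B ∈ (univ.erase j).powerset with #(M \ B) = k,
        (φ (insert j B) - φ B) * f j B := by
  classical
  rw [criticalPairs, sum_sigma]
  refine sum_congr rfl fun j _ => ?_
  rw [sum_filter, sum_filter]
  refine sum_congr rfl fun B _ => ?_
  rw [sub_eq_ite_isCritical hφ01 hmono]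
  split_ifs <;> simp_all

end CriticalPairs

lemma Finset.card_filter_le_orderEmbOfFin {α : Type*} [LinearOrder α] (s : Finset α) {k : ℕ}
    (h : #s = k) (i : Fin k) : #{y ∈ s | y ≤ s.orderEmbOfFin h i} = i + 1 := by
  have hfilter :
      {y ∈ s | y ≤ s.orderEmbOfFin h i} = (Iic i).map (s.orderEmbOfFin h).toEmbedding := by
    ext y
    simp only [mem_filter, mem_map, mem_Iic, RelEmbedding.coe_toEmbedding]
    constructor
    · rintro ⟨hy, hle⟩
      obtain ⟨m, rfl⟩ : y ∈ Set.range (s.orderEmbOfFin h) := by simpa using hy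
      exact ⟨m, by simpa using hle, rfl⟩
    · rintro ⟨m, hm, rfl⟩
      exact ⟨by simp, by simpa using hm⟩
  rw [hfilter, card_map, Fin.card_Iic]

section OrderStatistics
variable {Ω : Type*} {n : ℕ} {T : Fin n → Ω → ℝ} {ω : Ω} {M : Finset (Fin n)} {k : ℕ}

lemma orderStat_eq_orderEmbOfFin (hx : Function.Injective fun i => T i ω) (hk1 : 1 ≤ k)
    (hkm : k ≤ #M) :
    orderStat T M k ω = (M.image fun i => T i ω).orderEmbOfFin (card_image_of_injective M hx)
      ⟨k - 1, by omega⟩ := by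
  have hsort : (M.image fun i => T i ω).sort = (M.val.map fun i => T i ω).sort := by
    rw [← sort_val, image_val, Multiset.dedup_eq_self.mpr (M.nodup.map hx)]
  simp only [orderStat, orderEmbOfFin_apply, hsort]
  exact List.getD_eq_getElem _ _ _

lemma orderStat_mem (hx : Function.Injective fun i => T i ω) (hk1 : 1 ≤ k) (hkm : k ≤ #M) :
    ∃ j ∈ M, orderStat T M k ω = T j ω := by
  have hmem := orderEmbOfFin_mem _ (card_image_of_injective M hx) ⟨k - 1, by omega⟩
  rw [← orderStat_eq_orderEmbOfFin hx hk1 hkm, mem_image] at hmem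
  obtain ⟨j, hj, hjk⟩ := hmem
  exact ⟨j, hj, hjk.symm⟩

lemma orderStat_eq_iff (hx : Function.Injective fun i => T i ω) (hk1 : 1 ≤ k) (hkm : k ≤ #M)
    {j : Fin n} (hj : j ∈ M) :
    orderStat T M k ω = T j ω ↔ #{i ∈ M | T i ω ≤ T j ω} = k := by
  set s := M.image fun i => T i ω
  have hs : #s = #M := card_image_of_injective M hx
  obtain ⟨m, hm⟩ : T j ω ∈ Set.range (s.orderEmbOfFin hs) := by
    simp only [range_orderEmbOfFin, coe_image, Set.mem_image, s]
    exact ⟨j, hj, rfl⟩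
  have hcount : #{i ∈ M | T i ω ≤ T j ω} = m + 1 := by
    rw [← card_filter_le_orderEmbOfFin s hs m, hm, filter_image,
      card_image_of_injective _ hx]
  rw [orderStat_eq_orderEmbOfFin hx hk1 hkm, hcount, ← hm, (s.orderEmbOfFin hs).eq_iff_eq,
    Fin.ext_iff]
  simp only
  omega

end OrderStatistics

section SystemLifetime
variable {Ω : Type*} {n : ℕ} {T : Fin n → Ω → ℝ} {ω : Ω} {φ : Finset (Fin n) → ℝ}

lemma sysLifeOn_eq_of_isCritical (hmono : Monotone φ) (hφempty : φ ∅ = 0) {j : Fin n}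
    (hj : IsCritical φ j (survivors (fun i => T i ω) j)) :
    sysLifeOn T univ φ ω = T j ω := by
  set B := insert j (survivors (fun i => T i ω) j)
  have hB : B ∈ univ.powerset.filter fun A => φ A = 1 := by simpa using hj.1
  rw [sysLifeOn, dif_pos ⟨B, hB⟩]
  apply le_antisymm
  · refine sup'_le _ _ fun A hA => ?_
    have hA1 : φ A = 1 := (mem_filter.mp hA).2
    have hAne : A.Nonempty := nonempty_iff_ne_empty.mpr fun h => by simp [h, hφempty] at hA1
    rw [dif_pos hAne]
    by_contra hlt
    have hsub : A ⊆ survivors (fun i => T i ω) j := fun i hi =>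
      mem_survivors.mpr ((not_le.mp hlt).trans_le (inf'_le _ hi))
    have := hmono hsub
    rw [hA1, hj.2] at this
    norm_num at this
  · refine le_sup'_of_le _ hB ?_
    rw [dif_pos (insert_nonempty _ _)]
    refine le_inf' _ _ fun i hi => ?_
    rcases mem_insert.mp hi with rfl | hi
    · rfl
    · exact (mem_survivors.mp hi).le

lemma sysLifeOn_eq_orderStat_iff (hφ01 : ∀ A, φ A = 0 ∨ φ A = 1) (hmono : Monotone φ)
    (hφempty : φ ∅ = 0) (hφfull : φ univ = 1) (hx : Function.Injective fun i => T i ω)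
    {M : Finset (Fin n)} {k : ℕ} (hk1 : 1 ≤ k) (hkm : k ≤ #M) :
    sysLifeOn T univ φ ω = orderStat T M k ω ↔
      ∃ j ∈ M, IsCritical φ j (survivors (fun i => T i ω) j) ∧
        #(M \ survivors (fun i => T i ω) j) = k := by
  simp only [sdiff_survivors]
  constructor
  · intro h
    obtain ⟨j, hj⟩ := exists_isCritical_survivors hφ01 hmono hφempty hφfull hx
    obtain ⟨i, hiM, hi⟩ := orderStat_mem hx hk1 hkm
    have hji : j = i := hx <| show T j ω = T i ω by
      rw [← sysLifeOn_eq_of_isCritical hmono hφempty hj, h, hi]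
    subst hji
    refine ⟨j, hiM, hj, (orderStat_eq_iff hx hk1 hkm hiM).mp ?_⟩
    rw [← h, sysLifeOn_eq_of_isCritical hmono hφempty hj]
  · rintro ⟨j, hjM, hj, hcard⟩
    rw [sysLifeOn_eq_of_isCritical hmono hφempty hj,
      (orderStat_eq_iff hx hk1 hkm hjM).mpr hcard]

end SystemLifetime

section Events
variable {Ω : Type*} {n : ℕ} {T : Fin n → Ω → ℝ}

variable (T) in
def relQualEvent (j : Fin n) (B : Finset (Fin n)) : Set Ω :=
  {ω | (∀ i ∉ B, T i ω ≤ T j ω) ∧ ∀ i ∈ B, T j ω < T i ω}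

lemma relQual_eq_measure [MeasurableSpace Ω] (μ : Measure Ω) (j : Fin n) (B : Finset (Fin n)) :
    relQual μ T j B = (μ (relQualEvent T j B)).toReal :=
  rfl

lemma mem_relQualEvent_iff {ω : Ω} {j : Fin n} {B : Finset (Fin n)} :
    ω ∈ relQualEvent T j B ↔ B = survivors (fun i => T i ω) j := by
  constructor
  · rintro ⟨hout, hin⟩
    ext i
    rw [mem_survivors]
    exact ⟨hin i, fun hlt => by_contra fun hi => (hout i hi).not_gt hlt⟩
  · rintro rfl
    exact ⟨fun i hi => not_lt.mp fun h => hi (mem_survivors.mpr h),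
      fun i hi => mem_survivors.mp hi⟩

lemma measurableSet_relQualEvent [MeasurableSpace Ω] (hTmeas : ∀ i, Measurable (T i)) (j : Fin n)
    (B : Finset (Fin n)) : MeasurableSet (relQualEvent T j B) := by
  simp only [relQualEvent, Set.ofPred_and, Set.ofPred_forall]
  exact (MeasurableSet.iInter fun i => MeasurableSet.iInter fun _ =>
      measurableSet_le (hTmeas i) (hTmeas j)).inter
    (MeasurableSet.iInter fun i => MeasurableSet.iInter fun _ =>
      measurableSet_lt (hTmeas j) (hTmeas i))

end Events

lemma ae_injective_of_measure_eq_zero {Ω ι : Type*} [MeasurableSpace Ω] [Countable ι]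
    {μ : Measure Ω} {T : ι → Ω → ℝ} (hties : ∀ i j, i ≠ j → μ {ω | T i ω = T j ω} = 0) :
    ∀ᵐ ω ∂μ, Function.Injective fun i => T i ω := by
  refine ae_all_iff.mpr fun i => ae_all_iff.mpr fun j => ?_
  by_cases hij : i = j
  · exact .of_forall fun _ _ => hij
  · filter_upwards [measure_eq_zero_iff_ae_notMem.mp (hties i j hij)] with ω hω h
    exact (hω h).elim

section Signature
variable {Ω : Type*} [MeasurableSpace Ω] {μ : Measure Ω} {n : ℕ} {T : Fin n → Ω → ℝ}
  {φ : Finset (Fin n) → ℝ} {M : Finset (Fin n)} {k : ℕ}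

lemma ae_eq_biUnion_relQualEvent (hties : ∀ i j : Fin n, i ≠ j → μ {ω | T i ω = T j ω} = 0)
    (hφ01 : ∀ A, φ A = 0 ∨ φ A = 1) (hmono : Monotone φ) (hφempty : φ ∅ = 0)
    (hφfull : φ univ = 1) (hk1 : 1 ≤ k) (hkm : k ≤ #M) :
    {ω | sysLifeOn T univ φ ω = orderStat T M k ω} =ᵐ[μ]
      ⋃ p ∈ criticalPairs φ M k, relQualEvent T p.1 p.2 := by
  refine Filter.eventuallyEq_set.mpr ?_
  filter_upwards [ae_injective_of_measure_eq_zero hties] with ω hx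
  simp only [sysLifeOn_eq_orderStat_iff hφ01 hmono hφempty hφfull hx hk1 hkm,
    Set.mem_iUnion, mem_criticalPairs, mem_relQualEvent_iff, exists_prop, Sigma.exists]
  constructor
  · rintro ⟨j, hjM, hj, hcard⟩
    exact ⟨j, _, ⟨hjM, self_notMem_survivors _ j, hcard, hj⟩, rfl⟩
  · rintro ⟨j, B, ⟨hjM, -, hcard, hj⟩, rfl⟩
    exact ⟨j, hjM, hj, hcard⟩

lemma pairwise_aedisjoint_relQualEvent
    (hties : ∀ i j : Fin n, i ≠ j → μ {ω | T i ω = T j ω} = 0) (hmono : Monotone φ) :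
    (criticalPairs φ M k : Set (Σ _ : Fin n, Finset (Fin n))).Pairwise
      (Function.onFun (AEDisjoint μ) fun p => relQualEvent T p.1 p.2) := by
  rintro ⟨j, B⟩ hp ⟨j', B'⟩ hq hne
  rw [Function.onFun, AEDisjoint, measure_eq_zero_iff_ae_notMem]
  filter_upwards [ae_injective_of_measure_eq_zero hties] with ω hx ⟨hω, hω'⟩
  rw [mem_relQualEvent_iff] at hω hω'
  subst hω hω'
  have hjj' : j = j' := isCritical_survivors_unique hmono hx
    (mem_criticalPairs.mp hp).2.2.2 (mem_criticalPairs.mp hq).2.2.2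
  subst hjj'
  exact hne rfl

theorem signature_eq_sum_relQual [IsFiniteMeasure μ] (hTmeas : ∀ i, Measurable (T i))
    (hties : ∀ i j : Fin n, i ≠ j → μ {ω | T i ω = T j ω} = 0)
    (hφ01 : ∀ A, φ A = 0 ∨ φ A = 1) (hmono : Monotone φ) (hφempty : φ ∅ = 0)
    (hφfull : φ univ = 1) (hk1 : 1 ≤ k) (hkm : k ≤ #M) :
    (μ {ω | sysLifeOn T univ φ ω = orderStat T M k ω}).toReal =
      ∑ j ∈ M, ∑ B ∈ (univ.erase j).powerset with #(M \ B) = k,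
        (φ (insert j B) - φ B) * relQual μ T j B := by
  rw [measure_congr (ae_eq_biUnion_relQualEvent hties hφ01 hmono hφempty hφfull hk1 hkm),
    measure_biUnion_finset₀ (pairwise_aedisjoint_relQualEvent hties hmono)
      fun p _ => (measurableSet_relQualEvent hTmeas p.1 p.2).nullMeasurableSet,
    ENNReal.toReal_sum fun p _ => measure_ne_top μ _, ← sum_criticalPairs hφ01 hmono]
  exact sum_congr rfl fun p _ => (relQual_eq_measure μ p.1 p.2).symm

end Signature

theorem stmt_9_general {Ω : Type*} [MeasurableSpace Ω] (μ : Measure Ω) [IsProbabilityMeasure μ]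
    {n : ℕ} (T : Fin n → Ω → ℝ) (hTmeas : ∀ i, Measurable (T i))
    (hties : ∀ i j : Fin n, i ≠ j → μ {ω | T i ω = T j ω} = 0)
    (φ : Finset (Fin n) → ℝ)
    (hφ01 : ∀ A, φ A = 0 ∨ φ A = 1)
    (hφmono : ∀ A B : Finset (Fin n), A ⊆ B → φ A ≤ φ B)
    (hφempty : φ ∅ = 0) (hφfull : φ Finset.univ = 1)
    (hq : ∀ (j : Fin n) (A : Finset (Fin n)), j ∉ A →
      relQual μ T j A = 1 / ((n : ℝ) * ((n - 1).choose A.card : ℕ)))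
    (M : Finset (Fin n)) (k : ℕ) (hk1 : 1 ≤ k) (hkm : k ≤ M.card) :
    (μ {ω | sysLifeOn T Finset.univ φ ω = orderStat T M k ω}).toReal =
      ∑ j ∈ M, ∑ A ∈ (Finset.univ : Finset (Fin n)).powerset.filter
          (fun A => ((M \ A) ∪ {j}).card = k),
        (-1 : ℝ) ^ (({j} \ A : Finset (Fin n)).card) *
          (1 / ((n : ℝ) * ((n - 1).choose (A \ {j}).card : ℕ))) * φ A := by
  rw [signature_eq_sum_relQual hTmeas hties hφ01 (fun A B => hφmono A B) hφempty hφfull hk1 hkm]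
  refine sum_congr rfl fun j hj => ?_
  rw [sum_signed_powerset_eq φ (fun d => 1 / ((n : ℝ) * ((n - 1).choose d : ℕ))) hj k]
  refine sum_congr rfl fun B hB => ?_
  have hjB : j ∉ B := fun h => notMem_erase j univ (mem_powerset.mp (mem_filter.mp hB).1 h)
  rw [hq j B hjB]

theorem stmt_9 {Ω : Type*} [MeasurableSpace Ω] (μ : Measure Ω) [IsProbabilityMeasure μ]
    {n : ℕ} (T : Fin n → Ω → ℝ) (hTmeas : ∀ i, Measurable (T i))
    (hTnonneg : ∀ i ω, 0 ≤ T i ω)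
    (hties : ∀ i j : Fin n, i ≠ j → μ {ω | T i ω = T j ω} = 0)
    (φ : Finset (Fin n) → ℝ)
    (hφ01 : ∀ A, φ A = 0 ∨ φ A = 1)
    (hφmono : ∀ A B : Finset (Fin n), A ⊆ B → φ A ≤ φ B)
    (hφempty : φ ∅ = 0) (hφfull : φ Finset.univ = 1)
    (hq : ∀ (j : Fin n) (A : Finset (Fin n)), j ∉ A →
      relQual μ T j A = 1 / ((n : ℝ) * ((n - 1).choose A.card : ℕ)))
    (M : Finset (Fin n)) (hM : M.Nonempty) (k : ℕ) (hk1 : 1 ≤ k) (hkm : k ≤ M.card) :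
    (μ {ω | sysLifeOn T Finset.univ φ ω = orderStat T M k ω}).toReal =
      ∑ j ∈ M, ∑ A ∈ (Finset.univ : Finset (Fin n)).powerset.filter
          (fun A => ((M \ A) ∪ {j}).card = k),
        (-1 : ℝ) ^ (({j} \ A : Finset (Fin n)).card) *
          (1 / ((n : ℝ) * ((n - 1).choose (A \ {j}).card : ℕ))) * φ A :=
  stmt_9_general μ T hTmeas hties φ hφ01 hφmono hφempty hφfull hq M k hk1 hkm
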